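/- arXiv:2109.00611 — 3 statements merged into one kernel-verified Lean document; each statement's English description precedes it below -/
import Mathlib

section
/- Let α and λ be antisymmetric real 3×3 matrices, set θ_ν = 1 + (1/4)Σ_{μ=1}^3 λ_{μν} α_{μν} and assume θ_ν ≠ 0 for ν = 1,2,3. Define q'_i = q_i − (1/2)Σ_j α_{ij} p_j and p'_i = p_i + (1/2)Σ_j λ_{ij} q_j, viewed as smooth functions on ℝ⁶. Then with respect to the noncommutative Poisson bracket {f,g}_nc = Σ_{ν=1}^3 θ_ν^{-1}(∂f/∂p_ν ∂g/∂q_ν − ∂f/∂q_ν ∂g/∂p_ν), one has {p'_i, q'_j}_nc = F_{ij}, {p'_i, p'_j}_nc = D_{ij}, and {q'_i, q'_j}_nc = E_{ij}, where F_{ii} = θ_i^{-1} + (1/4)Σ_{j=1}^3 λ_{ij} α_{ij} θ_j^{-1}, F_{ij} = (1/4)Σ_{r=1}^3 λ_{ir} α_{jr} θ_r^{-1} for i ≠ j, D_{ij} = (λ_{ji}/2)(θ_i^{-1} + θ_j^{-1}), and E_{ij} = (α_{ji}/2)(θ_i^{-1} + θ_j^{-1}). -/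
open scoped BigOperators

/-- Phase space ℝ⁶ = {(q, p)} with q, p : Fin 3 → ℝ. -/
abbrev PhaseSpace := (Fin 3 → ℝ) × (Fin 3 → ℝ)

/-- Partial derivative of `f` with respect to the position coordinate `q_ν`. -/
noncomputable def pdQ (f : PhaseSpace → ℝ) (ν : Fin 3) (z : PhaseSpace) : ℝ :=
  fderiv ℝ f z (Pi.single ν 1, 0)

/-- Partial derivative of `f` with respect to the momentum coordinate `p_ν`. -/
noncomputable def pdP (f : PhaseSpace → ℝ) (ν : Fin 3) (z : PhaseSpace) : ℝ :=
  fderiv ℝ f z (0, Pi.single ν 1)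

/-- Noncommutative Poisson bracket
`{f,g}_nc = Σ_ν θ_ν⁻¹ (∂f/∂p_ν ∂g/∂q_ν − ∂f/∂q_ν ∂g/∂p_ν)`. -/
noncomputable def ncBracket (θ : Fin 3 → ℝ) (f g : PhaseSpace → ℝ) (z : PhaseSpace) : ℝ :=
  ∑ ν : Fin 3, (θ ν)⁻¹ * (pdP f ν z * pdQ g ν z - pdQ f ν z * pdP g ν z)

/-- Transformed position coordinate `q'_i = q_i − (1/2) Σ_j α_{ij} p_j`. -/
noncomputable def qNC (α : Matrix (Fin 3) (Fin 3) ℝ) (i : Fin 3) (z : PhaseSpace) : ℝ :=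
  z.1 i - (1/2) * ∑ j : Fin 3, α i j * z.2 j

/-- Transformed momentum coordinate `p'_i = p_i + (1/2) Σ_j λ_{ij} q_j`. -/
noncomputable def pNC (lam : Matrix (Fin 3) (Fin 3) ℝ) (i : Fin 3) (z : PhaseSpace) : ℝ :=
  z.2 i + (1/2) * ∑ j : Fin 3, lam i j * z.1 j

/-- `θ_ν = 1 + (1/4) Σ_μ λ_{μν} α_{μν}`. -/
noncomputable def θnc (α lam : Matrix (Fin 3) (Fin 3) ℝ) (ν : Fin 3) : ℝ :=
  1 + (1/4) * ∑ μ : Fin 3, lam μ ν * α μ ν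

/-- `F_{ii} = θ_i⁻¹ + (1/4) Σ_j λ_{ij} α_{ij} θ_j⁻¹` and
`F_{ij} = (1/4) Σ_r λ_{ir} α_{jr} θ_r⁻¹` for `i ≠ j`. -/
noncomputable def Fnc (α lam : Matrix (Fin 3) (Fin 3) ℝ) (i j : Fin 3) : ℝ :=
  if i = j then (θnc α lam i)⁻¹ + (1/4) * ∑ r : Fin 3, lam i r * α i r * (θnc α lam r)⁻¹
  else (1/4) * ∑ r : Fin 3, lam i r * α j r * (θnc α lam r)⁻¹

/-- `D_{ij} = (λ_{ji}/2)(θ_i⁻¹ + θ_j⁻¹)`. -/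
noncomputable def Dnc (α lam : Matrix (Fin 3) (Fin 3) ℝ) (i j : Fin 3) : ℝ :=
  (lam j i / 2) * ((θnc α lam i)⁻¹ + (θnc α lam j)⁻¹)

/-- `E_{ij} = (α_{ji}/2)(θ_i⁻¹ + θ_j⁻¹)`. -/
noncomputable def Enc (α lam : Matrix (Fin 3) (Fin 3) ℝ) (i j : Fin 3) : ℝ :=
  (α j i / 2) * ((θnc α lam i)⁻¹ + (θnc α lam j)⁻¹)


noncomputable def Lq (α : Matrix (Fin 3) (Fin 3) ℝ) (j : Fin 3) : PhaseSpace →L[ℝ] ℝ :=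
  (ContinuousLinearMap.proj j).comp (ContinuousLinearMap.fst ℝ (Fin 3 → ℝ) (Fin 3 → ℝ))
  - (1/2 : ℝ) • ∑ k : Fin 3, (α j k) •
      (ContinuousLinearMap.proj k).comp (ContinuousLinearMap.snd ℝ (Fin 3 → ℝ) (Fin 3 → ℝ))

noncomputable def Lp (lam : Matrix (Fin 3) (Fin 3) ℝ) (i : Fin 3) : PhaseSpace →L[ℝ] ℝ :=
  (ContinuousLinearMap.proj i).comp (ContinuousLinearMap.snd ℝ (Fin 3 → ℝ) (Fin 3 → ℝ))
  + (1/2 : ℝ) • ∑ k : Fin 3, (lam i k) •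
      (ContinuousLinearMap.proj k).comp (ContinuousLinearMap.fst ℝ (Fin 3 → ℝ) (Fin 3 → ℝ))

lemma Lq_apply (α : Matrix (Fin 3) (Fin 3) ℝ) (j : Fin 3) (v : PhaseSpace) :
    Lq α j v = v.1 j - (1/2) * ∑ k : Fin 3, α j k * v.2 k := by
  simp [Lq, ContinuousLinearMap.sum_apply, Finset.mul_sum, smul_eq_mul]

lemma Lp_apply (lam : Matrix (Fin 3) (Fin 3) ℝ) (i : Fin 3) (v : PhaseSpace) :
    Lp lam i v = v.2 i + (1/2) * ∑ k : Fin 3, lam i k * v.1 k := by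
  simp [Lp, ContinuousLinearMap.sum_apply, Finset.mul_sum, smul_eq_mul]

lemma qNC_eq (α : Matrix (Fin 3) (Fin 3) ℝ) (j : Fin 3) : qNC α j = ⇑(Lq α j) := by
  funext z; rw [Lq_apply]; rfl

lemma pNC_eq (lam : Matrix (Fin 3) (Fin 3) ℝ) (i : Fin 3) : pNC lam i = ⇑(Lp lam i) := by
  funext z; rw [Lp_apply]; rfl

lemma fderiv_qNC (α : Matrix (Fin 3) (Fin 3) ℝ) (j : Fin 3) (z : PhaseSpace) :
    fderiv ℝ (qNC α j) z = Lq α j := by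
  rw [qNC_eq]; exact (Lq α j).fderiv

lemma fderiv_pNC (lam : Matrix (Fin 3) (Fin 3) ℝ) (i : Fin 3) (z : PhaseSpace) :
    fderiv ℝ (pNC lam i) z = Lp lam i := by
  rw [pNC_eq]; exact (Lp lam i).fderiv

lemma pdQ_qNC (α : Matrix (Fin 3) (Fin 3) ℝ) (j ν : Fin 3) (z : PhaseSpace) :
    pdQ (qNC α j) ν z = if j = ν then 1 else 0 := by
  simp [pdQ, fderiv_qNC, Lq_apply, Pi.single_apply]

lemma pdP_qNC (α : Matrix (Fin 3) (Fin 3) ℝ) (j ν : Fin 3) (z : PhaseSpace) :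
    pdP (qNC α j) ν z = -(1/2) * α j ν := by
  simp [pdP, fderiv_qNC, Lq_apply, Pi.single_apply, mul_ite, Finset.sum_ite_eq]

lemma pdQ_pNC (lam : Matrix (Fin 3) (Fin 3) ℝ) (i ν : Fin 3) (z : PhaseSpace) :
    pdQ (pNC lam i) ν z = (1/2) * lam i ν := by
  simp [pdQ, fderiv_pNC, Lp_apply, Pi.single_apply, mul_ite, Finset.sum_ite_eq]

lemma pdP_pNC (lam : Matrix (Fin 3) (Fin 3) ℝ) (i ν : Fin 3) (z : PhaseSpace) :
    pdP (pNC lam i) ν z = if i = ν then 1 else 0 := by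
  simp [pdP, fderiv_pNC, Lp_apply, Pi.single_apply]

lemma finmk2 (h : 2 < 3) : (⟨2, h⟩ : Fin 3) = 2 := rfl

/-- The transformed coordinates satisfy `{p'_i, q'_j}_nc = F_{ij}`,
`{p'_i, p'_j}_nc = D_{ij}` and `{q'_i, q'_j}_nc = E_{ij}` with respect to the
noncommutative Poisson bracket. -/
theorem stmt1 (α lam : Matrix (Fin 3) (Fin 3) ℝ)
    (hα : ∀ i j, α j i = - α i j) (hlam : ∀ i j, lam j i = - lam i j)
    (hθ : ∀ ν, θnc α lam ν ≠ 0) :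
    ∀ (i j : Fin 3) (z : PhaseSpace),
      ncBracket (θnc α lam) (pNC lam i) (qNC α j) z = Fnc α lam i j ∧
      ncBracket (θnc α lam) (pNC lam i) (pNC lam j) z = Dnc α lam i j ∧
      ncBracket (θnc α lam) (qNC α i) (qNC α j) z = Enc α lam i j := by

  intro i j z
  have a0 : ∀ k, α k k = 0 := fun k => by have := hα k k; linarith
  have l0 : ∀ k, lam k k = 0 := fun k => by have := hlam k k; linarith
  refine ⟨?_, ?_, ?_⟩ <;>
    simp only [ncBracket, pdQ_qNC, pdP_qNC, pdQ_pNC, pdP_pNC, Fnc, Dnc, Enc,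
      Fin.sum_univ_three] <;>
    fin_cases i <;> fin_cases j <;>
    simp only [finmk2, Fin.zero_eta, Fin.mk_one, Fin.reduceEq, if_true, if_false, reduceIte,
      Fin.isValue, a0, l0, hα 0 1, hα 0 2, hα 1 2, hlam 0 1, hlam 0 2, hlam 1 2] <;>
    ring
end

section
/- Under conditions (C1): λ_{ij}θ_i = λ_{ji}θ_j and α_{ij}θ_i = α_{ji}θ_j for all i,j; (C3): the matrix F (with F_{ii} = θ_i^{-1} + (1/4)Σ_j λ_{ij}α_{ij}θ_j^{-1} and F_{ij} = (1/4)Σ_r λ_{ir}α_{jr}θ_r^{-1} for i≠j) is symmetric with F_{11} = F_{22} = F_{33}; then at every point (q,p) of ℝ⁶ with Y(q,p) ≠ 0 at which condition (C2) holds (q'_i λ_{κj}θ_i = q'_j λ_{κi}θ_j, q'_i α_{κi}θ_j = −q'_j α_{κj}θ_i, p'_i α_{κj}θ_i = p'_j α_{κi}θ_j, p'_i λ_{κi}θ_j = −p'_j λ_{κj}θ_i for all i,j,κ ∈ {1,2,3}), each component L'_i of the angular momentum L' = q'×p' Poisson-commutes with the Hamiltonian: {H', L'_i}_nc = 0 at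 that point, for i = 1,2,3. -/
open scoped BigOperators

/-- Levi-Civita symbol `ε_{ijh} = (1/2)(i−j)(j−h)(h−i)`. -/
noncomputable def eps (i j h : Fin 3) : ℝ :=
  (1/2) * ((i.1 : ℝ) - (j.1 : ℝ)) * ((j.1 : ℝ) - (h.1 : ℝ)) * ((h.1 : ℝ) - (i.1 : ℝ))

/-- Angular momentum `L' = q' × p'`, componentwise `L'_i = Σ_{j,h} ε_{ijh} q'_j p'_h`. -/
noncomputable def Lnc (α lam : Matrix (Fin 3) (Fin 3) ℝ) (i : Fin 3) (z : PhaseSpace) : ℝ :=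
  ∑ j : Fin 3, ∑ h : Fin 3, eps i j h * qNC α j z * pNC lam h z

/-- `Y = (Σ_i (q'_i)²)^{1/2}`, the Euclidean norm of `q'`. -/
noncomputable def Ync (α : Matrix (Fin 3) (Fin 3) ℝ) (z : PhaseSpace) : ℝ :=
  Real.sqrt (∑ i : Fin 3, (qNC α i z) ^ 2)

/-- Noncommutative Kepler Hamiltonian `H' = (1/(2m)) Σ_i (p'_i)² − k/Y`. -/
noncomputable def Hnc (α lam : Matrix (Fin 3) (Fin 3) ℝ) (m k : ℝ) (z : PhaseSpace) : ℝ :=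
  (1 / (2 * m)) * ∑ i : Fin 3, (pNC lam i z) ^ 2 - k / Ync α z

/-- Laplace–Runge–Lenz vector `A' = p' × L' − mk q'/Y`. -/
noncomputable def Anc (α lam : Matrix (Fin 3) (Fin 3) ℝ) (m k : ℝ) (i : Fin 3)
    (z : PhaseSpace) : ℝ :=
  (∑ j : Fin 3, ∑ h : Fin 3, eps i j h * pNC lam j z * Lnc α lam h z)
    - m * k * qNC α i z / Ync α z

/-- Condition (C1): `λ_{ij} θ_i = λ_{ji} θ_j` and `α_{ij} θ_i = α_{ji} θ_j` for all `i, j`. -/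
def CondC1 (α lam : Matrix (Fin 3) (Fin 3) ℝ) : Prop :=
  ∀ i j : Fin 3, lam i j * θnc α lam i = lam j i * θnc α lam j ∧
    α i j * θnc α lam i = α j i * θnc α lam j

/-- Condition (C2), holding at the point `z`: for all `i, j, κ`,
`q'_i λ_{κj} θ_i = q'_j λ_{κi} θ_j`, `q'_i α_{κi} θ_j = −q'_j α_{κj} θ_i`,
`p'_i α_{κj} θ_i = p'_j α_{κi} θ_j`, `p'_i λ_{κi} θ_j = −p'_j λ_{κj} θ_i`. -/
def CondC2 (α lam : Matrix (Fin 3) (Fin 3) ℝ) (z : PhaseSpace) : Prop :=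
  ∀ i j κ : Fin 3,
    qNC α i z * lam κ j * θnc α lam i = qNC α j z * lam κ i * θnc α lam j ∧
    qNC α i z * α κ i * θnc α lam j = -(qNC α j z * α κ j * θnc α lam i) ∧
    pNC lam i z * α κ j * θnc α lam i = pNC lam j z * α κ i * θnc α lam j ∧
    pNC lam i z * lam κ i * θnc α lam j = -(pNC lam j z * lam κ j * θnc α lam i)

/-- Condition (C3): the matrix `F` is symmetric with `F_{11} = F_{22} = F_{33}`. -/
def CondC3 (α lam : Matrix (Fin 3) (Fin 3) ℝ) : Prop :=
  (∀ i j : Fin 3, Fnc α lam i j = Fnc α lam j i) ∧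
    Fnc α lam 0 0 = Fnc α lam 1 1 ∧ Fnc α lam 1 1 = Fnc α lam 2 2

/-- Scaled Runge–Lenz–Pauli vector on negative energies: `Γ̂'⁻ = A'/(−2mH')^{1/2}`. -/
noncomputable def GamMinus (α lam : Matrix (Fin 3) (Fin 3) ℝ) (m k : ℝ) (i : Fin 3)
    (z : PhaseSpace) : ℝ :=
  Anc α lam m k i z / Real.sqrt (-(2 * m * Hnc α lam m k z))

/-- Scaled Runge–Lenz–Pauli vector on positive energies: `Γ̂'⁺ = A'/(2mH')^{1/2}`. -/
noncomputable def GamPlus (α lam : Matrix (Fin 3) (Fin 3) ℝ) (m k : ℝ) (i : Fin 3)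
    (z : PhaseSpace) : ℝ :=
  Anc α lam m k i z / Real.sqrt (2 * m * Hnc α lam m k z)


/-!
Taking `κ` equal to one of the two free indices in the second and fourth relations of (C2), using
`λ_κκ = α_κκ = 0` and `θ_κ ≠ 0`, gives `p'_j λ_{κj} = 0` and `q'_j α_{κj} = 0` at the point.
Hence `θ_ν p'_ν = p'_ν`, `θ_ν q'_ν = q'_ν`, and every term of `{H', L'_i}_nc` carrying a factor
of `α` or `λ` vanishes: `∂H'/∂p_ν = p'_ν / m`, `∂H'/∂q_ν = k q'_ν / Y³`, and the bracket collapses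
to `(p' × p')_i / m - k (q' × q')_i / Y³ = 0`.
-/

open ContinuousLinearMap

section Derivatives

variable (α lam : Matrix (Fin 3) (Fin 3) ℝ)

noncomputable def qNCL (i : Fin 3) : PhaseSpace →L[ℝ] ℝ :=
  LinearMap.toContinuousLinearMap
    { toFun := qNC α i
      map_add' := fun v w => by
        simp only [qNC, Prod.fst_add, Prod.snd_add, Pi.add_apply, mul_add, Finset.sum_add_distrib]
        ring
      map_smul' := fun c v => by
        simp only [qNC, Prod.smul_fst, Prod.smul_snd, Pi.smul_apply, smul_eq_mul,
          RingHom.id_apply, Finset.mul_sum, mul_sub]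
        ring_nf }

noncomputable def pNCL (i : Fin 3) : PhaseSpace →L[ℝ] ℝ :=
  LinearMap.toContinuousLinearMap
    { toFun := pNC lam i
      map_add' := fun v w => by
        simp only [pNC, Prod.fst_add, Prod.snd_add, Pi.add_apply, mul_add, Finset.sum_add_distrib]
        ring
      map_smul' := fun c v => by
        simp only [pNC, Prod.smul_fst, Prod.smul_snd, Pi.smul_apply, smul_eq_mul,
          RingHom.id_apply, Finset.mul_sum, mul_add]
        ring_nf }

@[simp] lemma qNCL_apply (i : Fin 3) (v : PhaseSpace) : qNCL α i v = qNC α i v := rfl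

@[simp] lemma pNCL_apply (i : Fin 3) (v : PhaseSpace) : pNCL lam i v = pNC lam i v := rfl

lemma hasFDerivAt_qNC (i : Fin 3) (z : PhaseSpace) : HasFDerivAt (qNC α i) (qNCL α i) z :=
  (qNCL α i).hasFDerivAt

lemma hasFDerivAt_pNC (i : Fin 3) (z : PhaseSpace) : HasFDerivAt (pNC lam i) (pNCL lam i) z :=
  (pNCL lam i).hasFDerivAt

lemma qNC_single_fst (i ν : Fin 3) :
    qNC α i (Pi.single ν 1, 0) = (Pi.single ν 1 : Fin 3 → ℝ) i := by
  simp [qNC]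

lemma qNC_single_snd (i ν : Fin 3) : qNC α i (0, Pi.single ν 1) = -(1 / 2) * α i ν := by
  simp [qNC, Pi.single_apply]

lemma pNC_single_fst (i ν : Fin 3) : pNC lam i (Pi.single ν 1, 0) = 1 / 2 * lam i ν := by
  simp [pNC, Pi.single_apply]

lemma pNC_single_snd (i ν : Fin 3) :
    pNC lam i (0, Pi.single ν 1) = (Pi.single ν 1 : Fin 3 → ℝ) i := by
  simp [pNC]

lemma hasFDerivAt_Lnc (i : Fin 3) (z : PhaseSpace) :
    HasFDerivAt (Lnc α lam i)
      (∑ j : Fin 3, ∑ h : Fin 3,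
        eps i j h • (qNC α j z • pNCL lam h + pNC lam h z • qNCL α j)) z := by
  refine HasFDerivAt.fun_sum fun j _ => HasFDerivAt.fun_sum fun h _ => ?_
  exact (((hasFDerivAt_qNC α j z).const_mul (eps i j h)).mul (hasFDerivAt_pNC lam h z)).congr_fderiv
    (by simp only [smul_add, smul_smul, mul_comm (pNC lam h z)])

lemma hasFDerivAt_Ync (z : PhaseSpace) (hY : Ync α z ≠ 0) :
    HasFDerivAt (Ync α) ((Ync α z)⁻¹ • ∑ i : Fin 3, qNC α i z • qNCL α i) z := by
  have hS : ∑ i : Fin 3, qNC α i z ^ 2 ≠ 0 := fun h => hY (by simp [Ync, h])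
  have hsq : HasFDerivAt (fun v => ∑ i : Fin 3, qNC α i v ^ 2)
      ((2 : ℝ) • ∑ i : Fin 3, qNC α i z • qNCL α i) z := by
    rw [Finset.smul_sum]
    refine HasFDerivAt.fun_sum fun i _ => ?_
    simpa [smul_smul] using (hasFDerivAt_qNC α i z).pow 2
  refine (hsq.sqrt hS).congr_fderiv ?_
  rw [smul_smul, ← Ync]
  field_simp

lemma hasFDerivAt_Hnc (m k : ℝ) (z : PhaseSpace) (hY : Ync α z ≠ 0) :
    HasFDerivAt (Hnc α lam m k)
      ((1 / m) • ∑ i : Fin 3, pNC lam i z • pNCL lam i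
        + (k / Ync α z ^ 3) • ∑ i : Fin 3, qNC α i z • qNCL α i) z := by
  have hkin : HasFDerivAt (fun v => ∑ i : Fin 3, pNC lam i v ^ 2)
      ((2 : ℝ) • ∑ i : Fin 3, pNC lam i z • pNCL lam i) z := by
    rw [Finset.smul_sum]
    refine HasFDerivAt.fun_sum fun i _ => ?_
    simpa [smul_smul] using (hasFDerivAt_pNC lam i z).pow 2
  have hpot : HasFDerivAt (fun v => k / Ync α v)
      ((-(k / Ync α z ^ 2)) • ((Ync α z)⁻¹ • ∑ i : Fin 3, qNC α i z • qNCL α i)) z :=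
    (((hasDerivAt_inv hY).const_mul k).comp_hasFDerivAt z
      (hasFDerivAt_Ync α z hY)).congr_fderiv (by rw [div_eq_mul_inv, mul_neg])
  refine ((hkin.const_mul (1 / (2 * m))).sub hpot).congr_fderiv ?_
  rw [smul_smul, smul_smul, sub_eq_add_neg, ← neg_smul]
  congr 2 <;> field_simp

end Derivatives

lemma sum_eps_mul_mul_self (i : Fin 3) (x : Fin 3 → ℝ) :
    ∑ j : Fin 3, ∑ h : Fin 3, eps i j h * x j * x h = 0 := by
  fin_cases i <;> simp [eps, Fin.sum_univ_three] <;> ring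

section Reduction

variable {α lam : Matrix (Fin 3) (Fin 3) ℝ} {z : PhaseSpace}

lemma CondC2.pNC_mul_lam_eq_zero (h2 : CondC2 α lam z) (hlam : ∀ i j, lam j i = -lam i j)
    (hθ : ∀ ν, θnc α lam ν ≠ 0) (j κ : Fin 3) : pNC lam j z * lam κ j = 0 := by
  have hκκ : lam κ κ = 0 := by linarith [hlam κ κ]
  have h := (h2 j κ κ).2.2.2
  rw [hκκ, mul_zero, zero_mul, neg_zero] at h
  exact (mul_eq_zero.mp h).resolve_right (hθ κ)

lemma CondC2.qNC_mul_α_eq_zero (h2 : CondC2 α lam z) (hα : ∀ i j, α j i = -α i j)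
    (hθ : ∀ ν, θnc α lam ν ≠ 0) (j κ : Fin 3) : qNC α j z * α κ j = 0 := by
  have hκκ : α κ κ = 0 := by linarith [hα κ κ]
  have h := (h2 κ j κ).2.1
  rw [hκκ, mul_zero, zero_mul, eq_comm, neg_eq_zero] at h
  exact (mul_eq_zero.mp h).resolve_right (hθ κ)

lemma inv_θnc_mul_pNC (hθ : ∀ ν, θnc α lam ν ≠ 0) (hp : ∀ j κ, pNC lam j z * lam κ j = 0)
    (ν : Fin 3) : (θnc α lam ν)⁻¹ * pNC lam ν z = pNC lam ν z := by
  rw [inv_mul_eq_iff_eq_mul₀ (hθ ν), θnc, add_mul, one_mul, left_eq_add, mul_assoc,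
    Finset.sum_mul, mul_eq_zero]
  exact Or.inr (Finset.sum_eq_zero fun μ _ => by linear_combination α μ ν * hp ν μ)

lemma inv_θnc_mul_qNC (hθ : ∀ ν, θnc α lam ν ≠ 0) (hq : ∀ j κ, qNC α j z * α κ j = 0)
    (ν : Fin 3) : (θnc α lam ν)⁻¹ * qNC α ν z = qNC α ν z := by
  rw [inv_mul_eq_iff_eq_mul₀ (hθ ν), θnc, add_mul, one_mul, left_eq_add, mul_assoc,
    Finset.sum_mul, mul_eq_zero]
  exact Or.inr (Finset.sum_eq_zero fun μ _ => by linear_combination lam μ ν * hq ν μ)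

lemma pdP_Hnc_eq (m k : ℝ) (hY : Ync α z ≠ 0) (hα : ∀ i j, α j i = -α i j)
    (hq : ∀ j κ, qNC α j z * α κ j = 0) (ν : Fin 3) :
    pdP (Hnc α lam m k) ν z = pNC lam ν z / m := by
  have hqα : ∑ i : Fin 3, qNC α i z * qNC α i (0, Pi.single ν 1) = 0 :=
    Finset.sum_eq_zero fun i _ => by
      rw [qNC_single_snd, hα ν i]; linear_combination (1 / 2) * hq i ν
  rw [pdP, (hasFDerivAt_Hnc α lam m k z hY).fderiv]
  simp only [add_apply, smul_apply, sum_apply, pNCL_apply, qNCL_apply, smul_eq_mul, hqα,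
    pNC_single_snd, Pi.single_apply, mul_ite, mul_one, mul_zero, Finset.sum_ite_eq',
    Finset.mem_univ, if_true]
  ring

lemma pdQ_Hnc_eq (m k : ℝ) (hY : Ync α z ≠ 0) (hlam : ∀ i j, lam j i = -lam i j)
    (hp : ∀ j κ, pNC lam j z * lam κ j = 0) (ν : Fin 3) :
    pdQ (Hnc α lam m k) ν z = k / Ync α z ^ 3 * qNC α ν z := by
  have hplam : ∑ i : Fin 3, pNC lam i z * pNC lam i (Pi.single ν 1, 0) = 0 :=
    Finset.sum_eq_zero fun i _ => by
      rw [pNC_single_fst, hlam ν i]; linear_combination (-1 / 2) * hp i ν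
  rw [pdQ, (hasFDerivAt_Hnc α lam m k z hY).fderiv]
  simp only [add_apply, smul_apply, sum_apply, pNCL_apply, qNCL_apply, smul_eq_mul, hplam,
    qNC_single_fst, Pi.single_apply, mul_ite, mul_one, mul_zero, Finset.sum_ite_eq',
    Finset.mem_univ, if_true]
  ring

lemma pNC_mul_pdQ_Lnc (hp : ∀ j κ, pNC lam j z * lam κ j = 0) (i ν : Fin 3) :
    pNC lam ν z * pdQ (Lnc α lam i) ν z = ∑ h : Fin 3, eps i ν h * pNC lam ν z * pNC lam h z := by
  rw [pdQ, (hasFDerivAt_Lnc α lam i z).fderiv]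
  simp only [add_apply, smul_apply, sum_apply, pNCL_apply, qNCL_apply, smul_eq_mul,
    pNC_single_fst, qNC_single_fst, Finset.mul_sum]
  calc _ = ∑ j : Fin 3, ∑ h : Fin 3,
        (Pi.single ν 1 : Fin 3 → ℝ) j * (eps i j h * pNC lam ν z * pNC lam h z) :=
      Finset.sum_congr rfl fun j _ => Finset.sum_congr rfl fun h _ => by
        linear_combination (1 / 2) * eps i j h * qNC α j z * hp ν h
    _ = _ := by simp [Pi.single_apply]

lemma qNC_mul_pdP_Lnc (hq : ∀ j κ, qNC α j z * α κ j = 0) (i ν : Fin 3) :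
    qNC α ν z * pdP (Lnc α lam i) ν z = ∑ j : Fin 3, eps i j ν * qNC α j z * qNC α ν z := by
  rw [pdP, (hasFDerivAt_Lnc α lam i z).fderiv]
  simp only [add_apply, smul_apply, sum_apply, pNCL_apply, qNCL_apply, smul_eq_mul,
    pNC_single_snd, qNC_single_snd, Finset.mul_sum]
  calc _ = ∑ j : Fin 3, ∑ h : Fin 3,
        (Pi.single ν 1 : Fin 3 → ℝ) h * (eps i j h * qNC α j z * qNC α ν z) :=
      Finset.sum_congr rfl fun j _ => Finset.sum_congr rfl fun h _ => by
        linear_combination (-1 / 2) * eps i j h * pNC lam h z * hq ν j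
    _ = _ := by simp [Pi.single_apply]

end Reduction

theorem stmt3_general (α lam : Matrix (Fin 3) (Fin 3) ℝ)
    (hα : ∀ i j, α j i = - α i j) (hlam : ∀ i j, lam j i = - lam i j)
    (m k : ℝ)
    (hθ : ∀ ν, θnc α lam ν ≠ 0) :
    ∀ z : PhaseSpace, Ync α z ≠ 0 → CondC2 α lam z →
      ∀ i : Fin 3, ncBracket (θnc α lam) (Hnc α lam m k) (Lnc α lam i) z = 0 := by
  intro z hY h2 i
  have hp := h2.pNC_mul_lam_eq_zero hlam hθ
  have hq := h2.qNC_mul_α_eq_zero hα hθ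
  have hterm : ∀ ν, (θnc α lam ν)⁻¹ * (pdP (Hnc α lam m k) ν z * pdQ (Lnc α lam i) ν z
      - pdQ (Hnc α lam m k) ν z * pdP (Lnc α lam i) ν z) =
        1 / m * ∑ h : Fin 3, eps i ν h * pNC lam ν z * pNC lam h z
          - k / Ync α z ^ 3 * ∑ j : Fin 3, eps i j ν * qNC α j z * qNC α ν z := by
    intro ν
    rw [pdP_Hnc_eq m k hY hα hq, pdQ_Hnc_eq m k hY hlam hp, ← pNC_mul_pdQ_Lnc hp,
      ← qNC_mul_pdP_Lnc hq]
    linear_combination pdQ (Lnc α lam i) ν z / m * inv_θnc_mul_pNC hθ hp ν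
      - k / Ync α z ^ 3 * pdP (Lnc α lam i) ν z * inv_θnc_mul_qNC hθ hq ν
  rw [ncBracket, Finset.sum_congr rfl fun ν _ => hterm ν, Finset.sum_sub_distrib,
    ← Finset.mul_sum, ← Finset.mul_sum, sum_eps_mul_mul_self, Finset.sum_comm,
    sum_eps_mul_mul_self i (qNC α · z)]
  ring

/-- Under conditions (C1) and (C3), at every point with `Y ≠ 0` where (C2) holds,
each component of the angular momentum `L' = q' × p'` Poisson-commutes with the
noncommutative Kepler Hamiltonian: `{H', L'_i}_nc = 0`. -/
theorem stmt3 (α lam : Matrix (Fin 3) (Fin 3) ℝ)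
    (hα : ∀ i j, α j i = - α i j) (hlam : ∀ i j, lam j i = - lam i j)
    (m k : ℝ) (hm : 0 < m)
    (hθ : ∀ ν, θnc α lam ν ≠ 0)
    (h1 : CondC1 α lam) (h3 : CondC3 α lam) :
    ∀ z : PhaseSpace, Ync α z ≠ 0 → CondC2 α lam z →
      ∀ i : Fin 3, ncBracket (θnc α lam) (Hnc α lam m k) (Lnc α lam i) z = 0 :=
  stmt3_general α lam hα hlam m k hθ
end

section
/- Fix a real constant M > 0, set Ñ₁ = 1, Ñ₂ = M, Ñ₃ = 1, and let h be a natural number. On the open set of points (I₁,I₂,I₃,φ¹,φ²,φ³) ∈ ℝ⁶ with I₁, I₂, I₃ > 0, define the brackets {f,g}_{P'} = Σ_{j=1}^3 Ñ_j (∂f/∂I_j ∂g/∂φ^j − ∂f/∂φ^j ∂g/∂I_j) and {f,g}_{P̃_h} = Σ_{j=1}^3 Ñ_j^{h+1} I_j^h (∂f/∂I_j ∂g/∂φ^j − ∂f/∂φ^j ∂g/∂I_j). Then {·,·}_{P̃_h} satisfies the Jacobi identity, and P̃_h is compatible with P': the sum bracket {f,g}_{P'} + {f,g}_{P̃_h}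 also satisfies the Jacobi identity on smooth functions. -/
open scoped BigOperators

/-- Partial derivative of `f` with respect to the action coordinate `I_j`. -/
noncomputable def pdI (f : PhaseSpace → ℝ) (j : Fin 3) (z : PhaseSpace) : ℝ :=
  fderiv ℝ f z (Pi.single j 1, 0)

/-- Partial derivative of `f` with respect to the angle coordinate `φ^j`. -/
noncomputable def pdA (f : PhaseSpace → ℝ) (j : Fin 3) (z : PhaseSpace) : ℝ :=
  fderiv ℝ f z (0, Pi.single j 1)

/-- The constants `Ñ₁ = 1, Ñ₂ = M, Ñ₃ = 1`. -/
noncomputable def Ntil (M : ℝ) : Fin 3 → ℝ := ![1, M, 1]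

/-- The Poisson bracket of the bivector `P'`:
`{f,g}_{P'} = Σ_j Ñ_j (∂f/∂I_j ∂g/∂φ^j − ∂f/∂φ^j ∂g/∂I_j)`. -/
noncomputable def brP (M : ℝ) (f g : PhaseSpace → ℝ) (z : PhaseSpace) : ℝ :=
  ∑ j : Fin 3, Ntil M j * (pdI f j z * pdA g j z - pdA f j z * pdI g j z)

/-- The Poisson bracket of the bivector `P̃_h`:
`{f,g}_{P̃_h} = Σ_j Ñ_j^{h+1} I_j^h (∂f/∂I_j ∂g/∂φ^j − ∂f/∂φ^j ∂g/∂I_j)`. -/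
noncomputable def brPt (M : ℝ) (h : ℕ) (f g : PhaseSpace → ℝ) (z : PhaseSpace) : ℝ :=
  ∑ j : Fin 3, (Ntil M j) ^ (h + 1) * (z.1 j) ^ h *
    (pdI f j z * pdA g j z - pdA f j z * pdI g j z)

/-- The sum of the two brackets. -/
noncomputable def brSum (M : ℝ) (h : ℕ) (f g : PhaseSpace → ℝ) (z : PhaseSpace) : ℝ :=
  brP M f g z + brPt M h f g z


def eI (j : Fin 3) : PhaseSpace := (Pi.single j 1, 0)
def eA (j : Fin 3) : PhaseSpace := (0, Pi.single j 1)

noncomputable def D2 (f : PhaseSpace → ℝ) (z v w : PhaseSpace) : ℝ :=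
  fderiv ℝ (fderiv ℝ f) z v w

variable {f : PhaseSpace → ℝ} {z v w : PhaseSpace}

lemma hasFDerivAt_pd (hf : ContDiff ℝ (⊤ : ℕ∞) f) (v z) :
    HasFDerivAt (fun y => fderiv ℝ f y v)
      ((ContinuousLinearMap.apply ℝ ℝ v).comp (fderiv ℝ (fderiv ℝ f) z)) z :=
  (ContinuousLinearMap.apply ℝ ℝ v).hasFDerivAt.comp z
    ((hf.fderiv_right (WithTop.coe_le_coe.mpr le_top)).differentiable one_ne_zero z).hasFDerivAt

lemma D2_symm (hf : ContDiff ℝ (⊤ : ℕ∞) f) (z v w) : D2 f z v w = D2 f z w v :=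
  second_derivative_symmetric (fun y => ((hf.differentiable (by simp)) y).hasFDerivAt)
    (((hf.fderiv_right (WithTop.coe_le_coe.mpr le_top)).differentiable one_ne_zero z).hasFDerivAt) v w

noncomputable def br (a : Fin 3 → ℝ → ℝ) (f g : PhaseSpace → ℝ) (z : PhaseSpace) : ℝ :=
  ∑ j : Fin 3, a j (z.1 j) *
    (fderiv ℝ f z (eI j) * fderiv ℝ g z (eA j) - fderiv ℝ f z (eA j) * fderiv ℝ g z (eI j))

noncomputable def Lc (j : Fin 3) : PhaseSpace →L[ℝ] ℝ :=
  (ContinuousLinearMap.proj j).comp (ContinuousLinearMap.fst ℝ (Fin 3 → ℝ) (Fin 3 → ℝ))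

lemma hasFDerivAt_coef (a : ℝ → ℝ) (ha : ContDiff ℝ (⊤ : ℕ∞) a) (j : Fin 3) (z : PhaseSpace) :
    HasFDerivAt (fun y : PhaseSpace => a (y.1 j)) (deriv a (z.1 j) • Lc j) z :=
  (((ha.differentiable (by simp)) (z.1 j)).hasDerivAt).comp_hasFDerivAt z (Lc j).hasFDerivAt

lemma fderiv_br (a : Fin 3 → ℝ → ℝ) (ha : ∀ j, ContDiff ℝ (⊤ : ℕ∞) (a j))
    {g w : PhaseSpace → ℝ} (hg : ContDiff ℝ (⊤ : ℕ∞) g) (hw : ContDiff ℝ (⊤ : ℕ∞) w)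
    (z v : PhaseSpace) :
    fderiv ℝ (br a g w) z v =
      ∑ j : Fin 3,
        (deriv (a j) (z.1 j) * v.1 j *
            (fderiv ℝ g z (eI j) * fderiv ℝ w z (eA j)
              - fderiv ℝ g z (eA j) * fderiv ℝ w z (eI j))
          + a j (z.1 j) *
            (D2 g z v (eI j) * fderiv ℝ w z (eA j)
              + fderiv ℝ g z (eI j) * D2 w z v (eA j)
              - D2 g z v (eA j) * fderiv ℝ w z (eI j)
              - fderiv ℝ g z (eA j) * D2 w z v (eI j))) := by
  have H : HasFDerivAt (br a g w)
      (∑ j : Fin 3, ((fderiv ℝ g z (eI j) * fderiv ℝ w z (eA j)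
              - fderiv ℝ g z (eA j) * fderiv ℝ w z (eI j)) • (deriv (a j) (z.1 j) • Lc j)
        + a j (z.1 j) •
          ((fderiv ℝ g z (eI j) •
              ((ContinuousLinearMap.apply ℝ ℝ (eA j)).comp (fderiv ℝ (fderiv ℝ w) z))
            + fderiv ℝ w z (eA j) •
              ((ContinuousLinearMap.apply ℝ ℝ (eI j)).comp (fderiv ℝ (fderiv ℝ g) z)))
           - (fderiv ℝ g z (eA j) •
              ((ContinuousLinearMap.apply ℝ ℝ (eI j)).comp (fderiv ℝ (fderiv ℝ w) z))
            + fderiv ℝ w z (eI j) •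
              ((ContinuousLinearMap.apply ℝ ℝ (eA j)).comp (fderiv ℝ (fderiv ℝ g) z)))))) z := by
    apply HasFDerivAt.fun_sum
    intro j _
    have Hc := hasFDerivAt_coef (a j) (ha j) j z
    have H1 := hasFDerivAt_pd hg (eI j) z
    have H2 := hasFDerivAt_pd hw (eA j) z
    have H3 := hasFDerivAt_pd hg (eA j) z
    have H4 := hasFDerivAt_pd hw (eI j) z
    have := Hc.mul ((H1.mul H2).sub (H3.mul H4))
    rw [add_comm] at this
    exact this
  rw [H.fderiv, ContinuousLinearMap.sum_apply]
  refine Finset.sum_congr rfl fun j _ => ?_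
  simp only [ContinuousLinearMap.add_apply, ContinuousLinearMap.sub_apply,
    ContinuousLinearMap.smul_apply, ContinuousLinearMap.comp_apply,
    ContinuousLinearMap.apply_apply, smul_eq_mul, D2, Lc,
    ContinuousLinearMap.proj_apply, ContinuousLinearMap.coe_fst']
  ring

set_option maxHeartbeats 2000000 in
lemma eI_fst (k : Fin 3) : (eI k).1 = Pi.single k 1 := rfl
lemma eA_fst (k : Fin 3) : (eA k).1 = 0 := rfl

lemma jacobi_br (a : Fin 3 → ℝ → ℝ) (ha : ∀ j, ContDiff ℝ (⊤ : ℕ∞) (a j))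
    {f g w : PhaseSpace → ℝ} (hf : ContDiff ℝ (⊤ : ℕ∞) f) (hg : ContDiff ℝ (⊤ : ℕ∞) g)
    (hw : ContDiff ℝ (⊤ : ℕ∞) w) (z : PhaseSpace) :
    br a f (br a g w) z + br a g (br a w f) z + br a w (br a f g) z = 0 := by
  simp only [br, fderiv_br a ha hg hw, fderiv_br a ha hw hf, fderiv_br a ha hf hg]
  simp only [Fin.sum_univ_three]
  simp only [eI_fst, eA_fst, Pi.zero_apply]
  norm_num [Pi.single_apply, Fin.ext_iff]
  simp only [D2_symm hf z (eA 0) (eI 0),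
    D2_symm hf z (eA 0) (eI 1),
    D2_symm hf z (eA 0) (eI 2),
    D2_symm hf z (eA 1) (eI 0),
    D2_symm hf z (eA 1) (eI 1),
    D2_symm hf z (eA 1) (eI 2),
    D2_symm hf z (eA 2) (eI 0),
    D2_symm hf z (eA 2) (eI 1),
    D2_symm hf z (eA 2) (eI 2),
    D2_symm hf z (eI 1) (eI 0),
    D2_symm hf z (eA 1) (eA 0),
    D2_symm hf z (eI 2) (eI 0),
    D2_symm hf z (eA 2) (eA 0),
    D2_symm hf z (eI 2) (eI 1),
    D2_symm hf z (eA 2) (eA 1),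
    D2_symm hg z (eA 0) (eI 0),
    D2_symm hg z (eA 0) (eI 1),
    D2_symm hg z (eA 0) (eI 2),
    D2_symm hg z (eA 1) (eI 0),
    D2_symm hg z (eA 1) (eI 1),
    D2_symm hg z (eA 1) (eI 2),
    D2_symm hg z (eA 2) (eI 0),
    D2_symm hg z (eA 2) (eI 1),
    D2_symm hg z (eA 2) (eI 2),
    D2_symm hg z (eI 1) (eI 0),
    D2_symm hg z (eA 1) (eA 0),
    D2_symm hg z (eI 2) (eI 0),
    D2_symm hg z (eA 2) (eA 0),
    D2_symm hg z (eI 2) (eI 1),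
    D2_symm hg z (eA 2) (eA 1),
    D2_symm hw z (eA 0) (eI 0),
    D2_symm hw z (eA 0) (eI 1),
    D2_symm hw z (eA 0) (eI 2),
    D2_symm hw z (eA 1) (eI 0),
    D2_symm hw z (eA 1) (eI 1),
    D2_symm hw z (eA 1) (eI 2),
    D2_symm hw z (eA 2) (eI 0),
    D2_symm hw z (eA 2) (eI 1),
    D2_symm hw z (eA 2) (eI 2),
    D2_symm hw z (eI 1) (eI 0),
    D2_symm hw z (eA 1) (eA 0),
    D2_symm hw z (eI 2) (eI 0),
    D2_symm hw z (eA 2) (eA 0),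
    D2_symm hw z (eI 2) (eI 1),
    D2_symm hw z (eA 2) (eA 1)]
  ring

/-- `{·,·}_{P̃_h}` satisfies the Jacobi identity on smooth functions on the open set
`{I₁,I₂,I₃ > 0}`, and `P̃_h` is compatible with `P'`: the sum bracket also
satisfies the Jacobi identity there. -/
theorem stmt13 (M : ℝ) (hM : 0 < M) (h : ℕ) :
    ∀ f g w : PhaseSpace → ℝ,
      ContDiff ℝ (⊤ : ℕ∞) f → ContDiff ℝ (⊤ : ℕ∞) g → ContDiff ℝ (⊤ : ℕ∞) w →
      ∀ z : PhaseSpace, (∀ j : Fin 3, 0 < z.1 j) →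
        (brPt M h f (brPt M h g w) z + brPt M h g (brPt M h w f) z
            + brPt M h w (brPt M h f g) z = 0) ∧
        (brSum M h f (brSum M h g w) z + brSum M h g (brSum M h w f) z
            + brSum M h w (brSum M h f g) z = 0) := by
  intro f g w hf hg hw z _hz
  have hpow : ∀ j : Fin 3, ∀ C : ℝ, ContDiff ℝ (⊤ : ℕ∞) (fun t : ℝ => C * t ^ h) :=
    fun _ C => contDiff_const.mul (contDiff_id.pow h)
  have e1 : ∀ u v : PhaseSpace → ℝ,
      brPt M h u v = br (fun j t => (Ntil M j) ^ (h + 1) * t ^ h) u v := fun u v => rfl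
  have e2 : ∀ u v : PhaseSpace → ℝ,
      brSum M h u v = br (fun j t => Ntil M j + (Ntil M j) ^ (h + 1) * t ^ h) u v := by
    intro u v
    funext y
    simp only [brSum, brP, brPt, br, pdI, pdA, eI, eA, ← Finset.sum_add_distrib]
    refine Finset.sum_congr rfl fun j _ => ?_
    ring
  constructor
  · rw [e1 g w, e1 w f, e1 f g, e1 f, e1 g, e1 w]
    exact jacobi_br _ (fun j => hpow j _) hf hg hw z
  · rw [e2 g w, e2 w f, e2 f g, e2 f, e2 g, e2 w]
    exact jacobi_br _ (fun j => contDiff_const.add (hpow j _)) hf hg hw z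
end
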